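/- Let x₁, y₁, x₂, y₂ ∈ ℝ with z₁ := x₁ + i·y₁ ≠ z₂ := x₂ + i·y₂, and set ζⱼ := xⱼ·e₁ + yⱼ·e₂ ∈ 𝔹 and ρ := 2e₁ + 2i·e₂. Then ζ₁ − ζ₂ is invertible in 𝔹 and (ζ₁ − ζ₂)⁻¹ = (z₁ − z₂)⁻¹·e₁ + (i·(y₁ − y₂)/(2(z₁ − z₂)²))·ρ. Moreover, for every c ∈ ℂ one has Re(c)·e₁ + Im(c)·e₂ = c·e₁ − (i·Im(c)/2)·ρ. -/

import Mathlib

/-- The biharmonic algebra `𝔹`, realized as the dual numbers over `ℂ`. -/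
noncomputable abbrev 𝔹 : Type := DualNumber ℂ

/-- The basis element `e₁ = 1` of the biharmonic algebra. -/
noncomputable def e₁ : 𝔹 := 1

/-- The basis element `e₂ = i + ε` of the biharmonic algebra. -/
noncomputable def e₂ : 𝔹 := Complex.I • 1 + DualNumber.eps

/-- The nilpotent element `ρ = 2e₁ + 2i·e₂` of the biharmonic algebra. -/
noncomputable def ρ : 𝔹 := (2 : ℂ) • e₁ + (2 * Complex.I) • e₂

/-!
In the dual numbers `a + bε` is invertible exactly when `a ≠ 0`, with inverse `a⁻¹ - (b / a²) ε`.
Since `ρ = 2iε`, this inverse is `a⁻¹·e₁ + (i b / (2a²))·ρ`. An element `x·e₁ + y·e₂` of the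
biharmonic plane has `a = x + iy` and `b = y`, which gives the inverse formula for `ζ₁ - ζ₂`.
-/

open Complex TrivSqZeroExt

theorem TrivSqZeroExt.ring_inverse_eq_inv {R M : Type*} [DivisionSemiring R] [AddCommGroup M]
    [Module Rᵐᵒᵖ M] [Module R M] [SMulCommClass R Rᵐᵒᵖ M] {x : TrivSqZeroExt R M} (hx : x.fst ≠ 0) :
    Ring.inverse x = x⁻¹ :=
  Ring.inverse_unit ⟨x, x⁻¹, TrivSqZeroExt.mul_inv_cancel hx, TrivSqZeroExt.inv_mul_cancel hx⟩

@[simp] theorem fst_e₁ : e₁.fst = 1 := rfl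

@[simp] theorem snd_e₁ : e₁.snd = 0 := rfl

@[simp] theorem fst_e₂ : e₂.fst = I := by simp [e₂]

@[simp] theorem snd_e₂ : e₂.snd = 1 := by simp [e₂]

@[simp] theorem fst_ρ : ρ.fst = 0 := by
  simp [ρ, mul_assoc]

@[simp] theorem snd_ρ : ρ.snd = 2 * I := by simp [ρ]

theorem fst_smul_e₁_add_smul_e₂ (a b : ℂ) : (a • e₁ + b • e₂).fst = a + I * b := by
  simp [mul_comm]

theorem snd_smul_e₁_add_smul_e₂ (a b : ℂ) : (a • e₁ + b • e₂).snd = b := by simp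

theorem ring_inverse_eq_smul_e₁_add_smul_ρ {w : 𝔹} (hw : w.fst ≠ 0) :
    Ring.inverse w = w.fst⁻¹ • e₁ + (I * w.snd / (2 * w.fst ^ 2)) • ρ := by
  rw [TrivSqZeroExt.ring_inverse_eq_inv hw]
  ext
  · simp only [fst_inv, fst_add, fst_smul, fst_e₁, smul_eq_mul, mul_one, fst_ρ, mul_zero, add_zero]
  · simp only [snd_inv, smul_eq_mul, MulOpposite.smul_eq_mul_unop, MulOpposite.unop_op,
      snd_add, snd_smul, snd_e₁, mul_zero, snd_ρ, zero_add]
    field_simp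
    linear_combination -w.snd * I_sq

theorem re_smul_e₁_add_im_smul_e₂ (c : ℂ) :
    (c.re : ℂ) • e₁ + (c.im : ℂ) • e₂ = c • e₁ - (I * (c.im : ℂ) / 2) • ρ := by
  ext
  · simp only [fst_add, fst_smul, fst_e₁, smul_eq_mul, mul_one, fst_e₂, re_add_im, fst_sub, fst_ρ,
      mul_zero, sub_zero]
  · simp only [snd_add, snd_smul, snd_e₁, smul_eq_mul, mul_zero, snd_e₂, mul_one, zero_add, snd_sub,
      snd_ρ, zero_sub]
    linear_combination (c.im : ℂ) * I_sq

theorem biharmonic_inverse_formula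
    (x₁ y₁ x₂ y₂ : ℝ)
    (z₁ z₂ : ℂ) (hz₁ : z₁ = (x₁ : ℂ) + Complex.I * (y₁ : ℂ))
    (hz₂ : z₂ = (x₂ : ℂ) + Complex.I * (y₂ : ℂ)) (hne : z₁ ≠ z₂)
    (ζ₁ ζ₂ : 𝔹)
    (hζ₁ : ζ₁ = (x₁ : ℂ) • e₁ + (y₁ : ℂ) • e₂)
    (hζ₂ : ζ₂ = (x₂ : ℂ) • e₁ + (y₂ : ℂ) • e₂) :
    (IsUnit (ζ₁ - ζ₂) ∧
      Ring.inverse (ζ₁ - ζ₂) =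
        (z₁ - z₂)⁻¹ • e₁ + (Complex.I * ((y₁ : ℂ) - (y₂ : ℂ)) / (2 * (z₁ - z₂) ^ 2)) • ρ) ∧
    ∀ c : ℂ, (c.re : ℂ) • e₁ + (c.im : ℂ) • e₂ = c • e₁ - (Complex.I * (c.im : ℂ) / 2) • ρ := by
  have hfst : (ζ₁ - ζ₂).fst = z₁ - z₂ := by
    rw [hζ₁, hζ₂, fst_sub, fst_smul_e₁_add_smul_e₂, fst_smul_e₁_add_smul_e₂, hz₁, hz₂]
  have hsnd : (ζ₁ - ζ₂).snd = (y₁ : ℂ) - y₂ := by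
    rw [hζ₁, hζ₂, snd_sub, snd_smul_e₁_add_smul_e₂, snd_smul_e₁_add_smul_e₂]
  have hunit : (ζ₁ - ζ₂).fst ≠ 0 := hfst ▸ sub_ne_zero.mpr hne
  refine ⟨⟨isUnit_iff_isUnit_fst.mpr hunit.isUnit, ?_⟩, re_smul_e₁_add_im_smul_e₂⟩
  rw [ring_inverse_eq_smul_e₁_add_smul_ρ hunit, hfst, hsnd]
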